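/- arXiv:2410.17070 — 4 statements merged into one kernel-verified Lean document; each statement's English description precedes it below -/
import Mathlib

section
/- Let n, p, d be positive natural numbers, let U be an n×n real diagonal matrix with strictly positive diagonal entries, let A be a p×p real positive definite matrix, and let X ∈ ℝ^{n×p}, B ∈ ℝ^{p×d}, Y ∈ ℝ^{n×d}. Define Ω = (X^⊤ U X + A^{-1})^{-1} and Γ = Ω (X^⊤ U Y + A^{-1} B). Then the d×d matrix B^⊤ A^{-1} B + Y^⊤ U Y − Γ^⊤ Ω^{-1} Γ is positive semidefinite. -/
/-!
The matrix in question is the Schur complement of the block `Xᴴ U X + A⁻¹` in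
`fromBlocks (Xᴴ U X + A⁻¹) C Cᴴ (Bᴴ A⁻¹ B + Yᴴ U Y)`, where `C = Xᴴ U Y + A⁻¹ B`. That block matrix
is the sum of the Gram matrices of the column blocks `[X | Y]` under `U` and `[1 | B]` under `A⁻¹`,
hence positive semidefinite, and so is its Schur complement.
-/

open Matrix
open scoped ComplexOrder

variable {𝕜 n p d : Type*} [RCLike 𝕜] [Fintype n] [Fintype p]

theorem Matrix.PosSemidef.fromBlocks_conjTranspose_mul_mul [Fintype d] {U : Matrix n n 𝕜}
    (hU : U.PosSemidef) (X : Matrix n p 𝕜) (Y : Matrix n d 𝕜) :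
    (fromBlocks (Xᴴ * U * X) (Xᴴ * U * Y) (Yᴴ * U * X) (Yᴴ * U * Y)).PosSemidef := by
  convert hU.conjTranspose_mul_mul_same (fromCols X Y) using 1
  rw [conjTranspose_fromCols_eq_fromRows_conjTranspose, fromRows_mul, fromRows_mul_fromCols]

theorem Matrix.PosSemidef.posDef_conjTranspose_mul_mul_add {U : Matrix n n 𝕜} {P : Matrix p p 𝕜}
    (hU : U.PosSemidef) (hP : P.PosDef) (X : Matrix n p 𝕜) : (Xᴴ * U * X + P).PosDef :=
  PosDef.posSemidef_add (hU.conjTranspose_mul_mul_same X) hP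

theorem Matrix.posSemidef_sub_conjTranspose_mul_inv_mul [Fintype d] [DecidableEq p]
    {U : Matrix n n 𝕜} {P : Matrix p p 𝕜} (hU : U.PosSemidef) (hP : P.PosDef)
    (X : Matrix n p 𝕜) (Y : Matrix n d 𝕜) (B : Matrix p d 𝕜) :
    (Bᴴ * P * B + Yᴴ * U * Y -
      (Xᴴ * U * Y + P * B)ᴴ * (Xᴴ * U * X + P)⁻¹ * (Xᴴ * U * Y + P * B)).PosSemidef := by
  have hM := hU.posDef_conjTranspose_mul_mul_add hP X
  have := hM.isUnit.invertible
  have hC : (Xᴴ * U * Y + P * B)ᴴ = Yᴴ * U * X + Bᴴ * P := by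
    simp only [conjTranspose_add, conjTranspose_mul, conjTranspose_conjTranspose, hU.1.eq,
      hP.1.eq, Matrix.mul_assoc]
  refine (PosDef.fromBlocks₁₁ _ _ hM).mp ?_
  rw [hC, add_comm (Bᴴ * P * B)]
  simpa only [fromBlocks_add, conjTranspose_one, Matrix.one_mul, Matrix.mul_one] using
    (hU.fromBlocks_conjTranspose_mul_mul X Y).add
      (hP.posSemidef.fromBlocks_conjTranspose_mul_mul 1 B)

theorem Matrix.IsHermitian.conjTranspose_inv_mul_mul_inv_mul [DecidableEq p] {M : Matrix p p 𝕜}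
    (hM : M.IsHermitian) (hdet : IsUnit M.det) (C : Matrix p d 𝕜) :
    (M⁻¹ * C)ᴴ * M⁻¹⁻¹ * (M⁻¹ * C) = Cᴴ * M⁻¹ * C := by
  rw [nonsing_inv_nonsing_inv M hdet, conjTranspose_mul, hM.inv.eq, Matrix.mul_assoc,
    ← Matrix.mul_assoc M, mul_nonsing_inv M hdet, Matrix.one_mul, Matrix.mul_assoc]

theorem stmt_3_general (n p d : ℕ)
    (u : Fin n → ℝ) (hu : ∀ i, 0 < u i)
    (U : Matrix (Fin n) (Fin n) ℝ) (hU : U = Matrix.diagonal u)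
    (A : Matrix (Fin p) (Fin p) ℝ) (hA : A.PosDef)
    (X : Matrix (Fin n) (Fin p) ℝ) (B : Matrix (Fin p) (Fin d) ℝ)
    (Y : Matrix (Fin n) (Fin d) ℝ)
    (Ω : Matrix (Fin p) (Fin p) ℝ) (hΩ : Ω = (Xᵀ * U * X + A⁻¹)⁻¹)
    (Γ : Matrix (Fin p) (Fin d) ℝ) (hΓ : Γ = Ω * (Xᵀ * U * Y + A⁻¹ * B)) :
    (Bᵀ * A⁻¹ * B + Yᵀ * U * Y - Γᵀ * Ω⁻¹ * Γ).PosSemidef := by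
  have hUpsd : U.PosSemidef := hU ▸ posSemidef_diagonal_iff.mpr fun i ↦ (hu i).le
  have hM := hUpsd.posDef_conjTranspose_mul_mul_add hA.inv X
  rw [hΓ, hΩ]
  simp only [← conjTranspose_eq_transpose_of_trivial]
  rw [hM.isHermitian.conjTranspose_inv_mul_mul_inv_mul ((isUnit_iff_isUnit_det _).mp hM.isUnit)]
  exact posSemidef_sub_conjTranspose_mul_inv_mul hUpsd hA.inv X Y B

theorem stmt_3 (n p d : ℕ) (hn : 0 < n) (hp : 0 < p) (hd : 0 < d)
    (u : Fin n → ℝ) (hu : ∀ i, 0 < u i)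
    (U : Matrix (Fin n) (Fin n) ℝ) (hU : U = Matrix.diagonal u)
    (A : Matrix (Fin p) (Fin p) ℝ) (hA : A.PosDef)
    (X : Matrix (Fin n) (Fin p) ℝ) (B : Matrix (Fin p) (Fin d) ℝ)
    (Y : Matrix (Fin n) (Fin d) ℝ)
    (Ω : Matrix (Fin p) (Fin p) ℝ) (hΩ : Ω = (Xᵀ * U * X + A⁻¹)⁻¹)
    (Γ : Matrix (Fin p) (Fin d) ℝ) (hΓ : Γ = Ω * (Xᵀ * U * Y + A⁻¹ * B)) :
    (Bᵀ * A⁻¹ * B + Yᵀ * U * Y - Γᵀ * Ω⁻¹ * Γ).PosSemidef :=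
  stmt_3_general n p d u hu U hU A hA X B Y Ω hΩ Γ hΓ
end

section
/- Let p be a positive natural number, let A be a p×p real positive definite matrix, and let S be a p×p real positive semidefinite matrix. Then A − (A^{-1} + 2S + S A S)^{-1} is positive semidefinite; that is, (A^{-1} + 2S + S A S)^{-1} ≼ A in the Loewner order. -/
/-! With `B = A⁻¹ + S` one has `A⁻¹ + 2S + SAS = BAB`, so the inverse is `B⁻¹A⁻¹B⁻¹` and
`A - B⁻¹A⁻¹B⁻¹ = B⁻¹ (BAB - A⁻¹) B⁻¹ = B⁻¹ (2S + SAS) B⁻¹`, a congruence of a positive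
semidefinite matrix. -/

open Matrix
open scoped ComplexOrder

namespace Matrix

variable {n : Type*} [Fintype n] [DecidableEq n]

section CommRing

variable {R : Type*} [CommRing R]

theorem inv_add_two_smul_add_mul_mul_eq {A : Matrix n n R} (hA : IsUnit A.det)
    (S : Matrix n n R) :
    A⁻¹ + (2 : R) • S + S * A * S = (A⁻¹ + S) * A * (A⁻¹ + S) := by
  simp only [two_smul, Matrix.add_mul, Matrix.mul_add, Matrix.mul_assoc,
    mul_nonsing_inv A hA, Matrix.mul_one, nonsing_inv_mul_cancel_left A S hA]
  abel

theorem sub_inv_mul_mul_eq {B : Matrix n n R} (hB : IsUnit B.det) (A : Matrix n n R) :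
    A - (B * A * B)⁻¹ = B⁻¹ * (B * A * B - A⁻¹) * B⁻¹ := by
  simp only [Matrix.mul_inv_rev, Matrix.mul_sub, Matrix.sub_mul, Matrix.mul_assoc,
    mul_nonsing_inv B hB, Matrix.mul_one, nonsing_inv_mul_cancel_left B A hB]

end CommRing

variable {𝕜 : Type*} [RCLike 𝕜]

theorem PosSemidef.sub_inv_mul_mul {A B : Matrix n n 𝕜} (hB : B.IsHermitian)
    (hBdet : IsUnit B.det) (h : (B * A * B - A⁻¹).PosSemidef) :
    (A - (B * A * B)⁻¹).PosSemidef := by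
  rw [sub_inv_mul_mul_eq hBdet]
  simpa only [hB.inv.eq] using h.mul_mul_conjTranspose_same B⁻¹

theorem PosDef.sub_inv_inv_add_two_smul_add_mul_mul {A S : Matrix n n 𝕜} (hA : A.PosDef)
    (hS : S.PosSemidef) : (A - (A⁻¹ + (2 : 𝕜) • S + S * A * S)⁻¹).PosSemidef := by
  have hAdet : IsUnit A.det := isUnit_iff_ne_zero.mpr hA.det_pos.ne'
  have hB : (A⁻¹ + S).PosDef := hA.inv.add_posSemidef hS
  have hSAS : (S * A * S).PosSemidef := by
    simpa only [hS.isHermitian.eq] using hA.posSemidef.conjTranspose_mul_mul_same S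
  have hdiff : (A⁻¹ + S) * A * (A⁻¹ + S) - A⁻¹ = S + S + S * A * S := by
    rw [← inv_add_two_smul_add_mul_mul_eq hAdet, two_smul]
    abel
  rw [inv_add_two_smul_add_mul_mul_eq hAdet]
  refine PosSemidef.sub_inv_mul_mul hB.isHermitian
    (isUnit_iff_ne_zero.mpr hB.det_pos.ne') ?_
  rw [hdiff]
  exact (hS.add hS).add hSAS

end Matrix

theorem stmt_5_general (p : ℕ)
    (A : Matrix (Fin p) (Fin p) ℝ) (hA : A.PosDef)
    (S : Matrix (Fin p) (Fin p) ℝ) (hS : S.PosSemidef) :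
    (A - (A⁻¹ + (2 : ℝ) • S + S * A * S)⁻¹).PosSemidef :=
  hA.sub_inv_inv_add_two_smul_add_mul_mul hS

theorem stmt_5 (p : ℕ) (hp : 0 < p)
    (A : Matrix (Fin p) (Fin p) ℝ) (hA : A.PosDef)
    (S : Matrix (Fin p) (Fin p) ℝ) (hS : S.PosSemidef) :
    (A - (A⁻¹ + (2 : ℝ) • S + S * A * S)⁻¹).PosSemidef :=
  stmt_5_general p A hA S hS
end

section
/- Let h : (0,∞) → [0,∞) be measurable, let d be a positive natural number, and suppose 0 < ∫₀^∞ u^{d/2} h(u) du < ∞ and ∫₀^∞ u^{d/2+2} h(u) du < ∞. Then for every c ≥ 0, (∫₀^∞ u^{d/2+2} e^{-cu} h(u) du) / (∫₀^∞ u^{d/2} e^{-cu} h(u) du) ≤ (∫₀^∞ u^{d/2+2} h(u) du) / (∫₀^∞ u^{d/2} h(u) du), where the left-hand denominator is strictly positive. -/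
/-!
Integrating the pointwise inequality `w x w y (f y - f x)(g y - g x) ≤ 0` for oppositely ordered
`f`, `g` and a weight `w ≥ 0` over the product measure gives Chebyshev's integral inequality
`(∫ w f g)(∫ w) ≤ (∫ w f)(∫ w g)`. With `w u = u^{d/2} h(u)`, `f u = u²` (increasing on
`(0, ∞)`) and `g u = e^{-cu}` (decreasing), this is the claimed bound after clearing denominators.
-/

open MeasureTheory Real Set

section Chebyshev

variable {α : Type*} [MeasurableSpace α] {μ : Measure α} {s : Set α} {w f g : α → ℝ}

theorem AntivaryOn.setIntegral_weighted_mul_le [SFinite μ] (hfg : AntivaryOn f g s)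
    (hs : MeasurableSet s) (hw : ∀ x ∈ s, 0 ≤ w x) (hw_int : IntegrableOn w s μ)
    (hwf : IntegrableOn (fun x => w x * f x) s μ) (hwg : IntegrableOn (fun x => w x * g x) s μ)
    (hwfg : IntegrableOn (fun x => w x * f x * g x) s μ) :
    (∫ x in s, w x * f x * g x ∂μ) * (∫ x in s, w x ∂μ) ≤
      (∫ x in s, w x * f x ∂μ) * ∫ x in s, w x * g x ∂μ := by
  set ν := μ.restrict s
  have hpointwise : ∀ᵐ z ∂ν.prod ν,
      w z.1 * w z.2 * ((f z.2 - f z.1) * (g z.2 - g z.1)) ≤ 0 := by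
    rw [Measure.prod_restrict]
    refine ae_restrict_of_forall_mem (hs.prod hs) fun z hz => ?_
    exact mul_nonpos_of_nonneg_of_nonpos (mul_nonneg (hw _ hz.1) (hw _ hz.2))
      (hfg.sub_mul_sub_nonpos hz.1 hz.2)
  have hexpand : ∀ z : α × α, w z.1 * w z.2 * ((f z.2 - f z.1) * (g z.2 - g z.1)) =
      (w z.1 * (w z.2 * f z.2 * g z.2) + w z.1 * f z.1 * g z.1 * w z.2) -
        (w z.1 * f z.1 * (w z.2 * g z.2) + w z.1 * g z.1 * (w z.2 * f z.2)) :=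
    fun z => by ring
  have hdouble : ∫ z, w z.1 * w z.2 * ((f z.2 - f z.1) * (g z.2 - g z.1)) ∂ν.prod ν =
      2 * ((∫ x, w x * f x * g x ∂ν) * (∫ x, w x ∂ν) -
        (∫ x, w x * f x ∂ν) * ∫ x, w x * g x ∂ν) := by
    have h₁ : Integrable (fun z : α × α => w z.1 * (w z.2 * f z.2 * g z.2)) (ν.prod ν) :=
      hw_int.mul_prod hwfg
    have h₂ : Integrable (fun z : α × α => w z.1 * f z.1 * g z.1 * w z.2) (ν.prod ν) :=
      hwfg.mul_prod hw_int
    have h₃ : Integrable (fun z : α × α => w z.1 * f z.1 * (w z.2 * g z.2)) (ν.prod ν) :=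
      hwf.mul_prod hwg
    have h₄ : Integrable (fun z : α × α => w z.1 * g z.1 * (w z.2 * f z.2)) (ν.prod ν) :=
      hwg.mul_prod hwf
    simp_rw [hexpand]
    rw [integral_sub, integral_add h₁ h₂, integral_add h₃ h₄,
      integral_prod_mul w (fun x => w x * f x * g x),
      integral_prod_mul (fun x => w x * f x * g x) w,
      integral_prod_mul (fun x => w x * f x) (fun x => w x * g x),
      integral_prod_mul (fun x => w x * g x) (fun x => w x * f x)]
    · ring
    exacts [h₁.add h₂, h₃.add h₄]
  have := integral_nonpos_of_ae hpointwise
  linarith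

theorem setIntegral_mul_pos_of_pos (hs : MeasurableSet s) (hw : ∀ x ∈ s, 0 ≤ w x)
    (hg : ∀ x ∈ s, 0 < g x) (hw_int : IntegrableOn w s μ)
    (hwg : IntegrableOn (fun x => w x * g x) s μ) (hpos : 0 < ∫ x in s, w x ∂μ) :
    0 < ∫ x in s, w x * g x ∂μ := by
  rw [setIntegral_pos_iff_support_of_nonneg_ae (ae_restrict_of_forall_mem hs hw) hw_int] at hpos
  rw [setIntegral_pos_iff_support_of_nonneg_ae
    (ae_restrict_of_forall_mem hs fun x hx => mul_nonneg (hw x hx) (hg x hx).le) hwg]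
  convert hpos using 2
  ext x
  simp only [mem_inter_iff, Function.mem_support]
  exact and_congr_left fun hx => mul_ne_zero_iff_right (hg x hx).ne'

end Chebyshev

theorem antivaryOn_sq_exp_neg_mul {c : ℝ} (hc : 0 ≤ c) :
    AntivaryOn (fun u : ℝ => u ^ 2) (fun u => exp (-c * u)) (Ioi 0) :=
  (pow_left_monotoneOn.mono fun _ hu => le_of_lt hu).antivaryOn
    fun _ _ _ _ hxy => exp_le_exp.2 (by nlinarith)

theorem IntegrableOn.mul_exp_neg_mul {f : ℝ → ℝ} (hf : IntegrableOn f (Ioi 0)) {c : ℝ}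
    (hc : 0 ≤ c) : IntegrableOn (fun u => f u * exp (-c * u)) (Ioi 0) := by
  refine hf.mul_bdd (c := 1) (by fun_prop) (ae_restrict_of_forall_mem measurableSet_Ioi ?_)
  intro u hu
  rw [norm_of_nonneg (exp_pos _).le, exp_le_one_iff]
  nlinarith [mem_Ioi.1 hu]

theorem stmt_7_general (d : ℕ) (h : ℝ → ℝ)
    (hnonneg : ∀ u ∈ Set.Ioi (0 : ℝ), 0 ≤ h u)
    (hint0 : IntegrableOn (fun u : ℝ => u ^ ((d : ℝ) / 2) * h u) (Set.Ioi 0))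
    (hpos0 : 0 < ∫ u in Set.Ioi (0 : ℝ), u ^ ((d : ℝ) / 2) * h u)
    (hint2 : IntegrableOn (fun u : ℝ => u ^ ((d : ℝ) / 2 + 2) * h u) (Set.Ioi 0)) :
    ∀ c : ℝ, 0 ≤ c →
      0 < (∫ u in Set.Ioi (0 : ℝ), u ^ ((d : ℝ) / 2) * Real.exp (-c * u) * h u) ∧
      (∫ u in Set.Ioi (0 : ℝ), u ^ ((d : ℝ) / 2 + 2) * Real.exp (-c * u) * h u) /
          (∫ u in Set.Ioi (0 : ℝ), u ^ ((d : ℝ) / 2) * Real.exp (-c * u) * h u) ≤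
        (∫ u in Set.Ioi (0 : ℝ), u ^ ((d : ℝ) / 2 + 2) * h u) /
          (∫ u in Set.Ioi (0 : ℝ), u ^ ((d : ℝ) / 2) * h u) := by
  intro c hc
  set w : ℝ → ℝ := fun u => u ^ ((d : ℝ) / 2) * h u
  have hw : ∀ u ∈ Ioi (0 : ℝ), 0 ≤ w u :=
    fun u hu => mul_nonneg (rpow_nonneg hu.le _) (hnonneg u hu)
  have hrpow : ∀ u ∈ Ioi (0 : ℝ), u ^ ((d : ℝ) / 2 + 2) = u ^ ((d : ℝ) / 2) * u ^ 2 :=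
    fun u hu => by rw [rpow_add hu, rpow_two]
  have hwf : IntegrableOn (fun u => w u * u ^ 2) (Ioi 0) :=
    hint2.congr_fun (fun u hu => by simp only [w, hrpow u hu]; ring) measurableSet_Ioi
  have hwg := IntegrableOn.mul_exp_neg_mul hint0 hc
  have hwfg := IntegrableOn.mul_exp_neg_mul hwf hc
  have hden := setIntegral_mul_pos_of_pos measurableSet_Ioi hw (fun u _ => exp_pos (-c * u))
    hint0 hwg hpos0
  have hcheb := (antivaryOn_sq_exp_neg_mul hc).setIntegral_weighted_mul_le measurableSet_Ioi hw
    hint0 hwf hwg hwfg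
  have e₁ : ∫ u in Ioi (0 : ℝ), u ^ ((d : ℝ) / 2 + 2) * exp (-c * u) * h u =
      ∫ u in Ioi 0, w u * u ^ 2 * exp (-c * u) :=
    setIntegral_congr_fun measurableSet_Ioi fun u hu => by simp only [w, hrpow u hu]; ring
  have e₂ : ∫ u in Ioi (0 : ℝ), u ^ ((d : ℝ) / 2) * exp (-c * u) * h u =
      ∫ u in Ioi 0, w u * exp (-c * u) :=
    integral_congr_ae (ae_of_all _ fun u => by simp only [w]; ring)
  have e₃ : ∫ u in Ioi (0 : ℝ), u ^ ((d : ℝ) / 2 + 2) * h u = ∫ u in Ioi 0, w u * u ^ 2 :=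
    setIntegral_congr_fun measurableSet_Ioi fun u hu => by simp only [w, hrpow u hu]; ring
  rw [e₁, e₂, e₃]
  exact ⟨hden, (div_le_div_iff₀ hden hpos0).2 hcheb⟩

theorem stmt_7 (d : ℕ) (hd : 0 < d) (h : ℝ → ℝ) (hmeas : Measurable h)
    (hnonneg : ∀ u ∈ Set.Ioi (0 : ℝ), 0 ≤ h u)
    (hint0 : IntegrableOn (fun u : ℝ => u ^ ((d : ℝ) / 2) * h u) (Set.Ioi 0))
    (hpos0 : 0 < ∫ u in Set.Ioi (0 : ℝ), u ^ ((d : ℝ) / 2) * h u)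
    (hint2 : IntegrableOn (fun u : ℝ => u ^ ((d : ℝ) / 2 + 2) * h u) (Set.Ioi 0)) :
    ∀ c : ℝ, 0 ≤ c →
      0 < (∫ u in Set.Ioi (0 : ℝ), u ^ ((d : ℝ) / 2) * Real.exp (-c * u) * h u) ∧
      (∫ u in Set.Ioi (0 : ℝ), u ^ ((d : ℝ) / 2 + 2) * Real.exp (-c * u) * h u) /
          (∫ u in Set.Ioi (0 : ℝ), u ^ ((d : ℝ) / 2) * Real.exp (-c * u) * h u) ≤
        (∫ u in Set.Ioi (0 : ℝ), u ^ ((d : ℝ) / 2 + 2) * h u) /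
          (∫ u in Set.Ioi (0 : ℝ), u ^ ((d : ℝ) / 2) * h u) :=
  stmt_7_general d h hnonneg hint0 hpos0 hint2
end

section
/- Let n, p, d be positive natural numbers with n ≥ p + d, and let X ∈ ℝ^{n×p}, Y ∈ ℝ^{n×d} be such that the concatenated matrix W = (X Y) ∈ ℝ^{n×(p+d)} has full column rank p + d. Write Q_X = I_n − X (X^⊤ X)^{-1} X^⊤ and Q_Y = I_n − Y (Y^⊤ Y)^{-1} Y^⊤. Then (Y^⊤ Q_X Y)^{-1} = (Y^⊤ Y)^{-1} + (Y^⊤ Y)^{-1} Y^⊤ X (X^⊤ Q_Y X)^{-1} X^⊤ Y (Y^⊤ Y)^{-1}. -/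
/-!
Since `Yᵀ Q_X Y = YᵀY - YᵀX (XᵀX)⁻¹ XᵀY` and `Xᵀ Q_Y X = XᵀX - XᵀY (YᵀY)⁻¹ YᵀX`, the identity is
the Woodbury formula. Full column rank of `W = (X Y)` makes `W`, hence `X` and `Y`, injective, so
the Gram matrices `XᵀX`, `YᵀY` and `WᵀW` are invertible; `Xᵀ Q_Y X` is the Schur complement of
`YᵀY` in `WᵀW`, hence invertible as well.
-/

open Matrix

namespace Matrix

variable {m k l o R : Type*}

theorem mulVec_injective_of_rank_eq_card [Fintype k] [Field R] {A : Matrix m k R}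
    (h : A.rank = Fintype.card k) : Function.Injective A.mulVec := by
  have hker : Module.finrank R (LinearMap.ker A.mulVecLin) = 0 := by
    have := LinearMap.finrank_range_add_finrank_ker A.mulVecLin
    rw [← Matrix.rank, h, Module.finrank_fintype_fun_eq_card] at this
    omega
  rw [← coe_mulVecLin, ← LinearMap.ker_eq_bot]
  exact Submodule.finrank_eq_zero.mp hker

theorem mulVec_injective_of_fromCols_left [Fintype k] [Fintype l] [Semiring R]
    {A : Matrix m k R} {B : Matrix m l R} (h : Function.Injective (fromCols A B).mulVec) :
    Function.Injective A.mulVec := fun u v huv => by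
  simpa using congrArg (· ∘ Sum.inl) (@h (Sum.elim u 0) (Sum.elim v 0) (by simpa using huv))

theorem mulVec_injective_of_fromCols_right [Fintype k] [Fintype l] [Semiring R]
    {A : Matrix m k R} {B : Matrix m l R} (h : Function.Injective (fromCols A B).mulVec) :
    Function.Injective B.mulVec := fun u v huv => by
  simpa using congrArg (· ∘ Sum.inr) (@h (Sum.elim 0 u) (Sum.elim 0 v) (by simpa using huv))

theorem isUnit_transpose_mul_self [Fintype m] [Fintype k] [DecidableEq k] [Field R] [LinearOrder R]
    [IsStrictOrderedRing R] {A : Matrix m k R} (hA : Function.Injective A.mulVec) :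
    IsUnit (Aᵀ * A) := by
  rwa [← mulVec_injective_iff_isUnit, ← coe_mulVecLin, ← LinearMap.ker_eq_bot,
    ker_mulVecLin_transpose_mul_self, LinearMap.ker_eq_bot, coe_mulVecLin]

theorem isUnit_schur_complement_of_injective_fromCols [Fintype m] [Fintype k] [Fintype l]
    [DecidableEq k] [DecidableEq l] [Field R] [LinearOrder R] [IsStrictOrderedRing R]
    {A : Matrix m k R} {B : Matrix m l R} (h : Function.Injective (fromCols A B).mulVec) :
    IsUnit (Aᵀ * A - Aᵀ * B * (Bᵀ * B)⁻¹ * (Bᵀ * A)) := by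
  have := (isUnit_transpose_mul_self (mulVec_injective_of_fromCols_right h)).invertible
  rw [← invOf_eq_nonsing_inv, ← isUnit_fromBlocks_iff_of_invertible₂₂, ← fromRows_mul_fromCols,
    ← transpose_fromCols]
  exact isUnit_transpose_mul_self h

theorem mul_one_sub_mul_mul [Fintype m] [Fintype l] [DecidableEq m] [Ring R]
    (M : Matrix o m R) (U : Matrix m l R) (G : Matrix l l R) (V : Matrix l m R)
    (N : Matrix m k R) :
    M * (1 - U * G * V) * N = M * N - M * U * G * (V * N) := by
  simp only [Matrix.mul_sub, Matrix.sub_mul, Matrix.one_mul, Matrix.mul_assoc]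

theorem sub_mul_mul_inv_eq_add [Fintype m] [Fintype k] [DecidableEq m] [DecidableEq k]
    [CommRing R] {A : Matrix m m R} {B : Matrix m k R} {C : Matrix k m R} {D : Matrix k k R}
    (hA : IsUnit A) (hD : IsUnit D) (hS : IsUnit (D - C * A⁻¹ * B)) :
    (A - B * D⁻¹ * C)⁻¹ = A⁻¹ + A⁻¹ * B * (D - C * A⁻¹ * B)⁻¹ * C * A⁻¹ := by
  have hD' : D⁻¹⁻¹ = D := nonsing_inv_nonsing_inv _ ((isUnit_iff_isUnit_det _).mp hD)
  have hS' : IsUnit (D⁻¹⁻¹ + -C * A⁻¹ * B) := by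
    rwa [hD', Matrix.neg_mul, Matrix.neg_mul, ← sub_eq_add_neg]
  have := add_mul_mul_inv_eq_sub A B D⁻¹ (-C) hA (isUnit_nonsing_inv_iff.mpr hD) hS'
  rw [hD'] at this
  simpa [sub_eq_add_neg, Matrix.mul_neg, Matrix.neg_mul] using this

end Matrix

theorem stmt_14_general (n p d : ℕ)
    (X : Matrix (Fin n) (Fin p) ℝ) (Y : Matrix (Fin n) (Fin d) ℝ)
    (hrank : (Matrix.fromCols X Y).rank = p + d)
    (QX : Matrix (Fin n) (Fin n) ℝ)
    (hQX : QX = (1 : Matrix (Fin n) (Fin n) ℝ) - X * (Xᵀ * X)⁻¹ * Xᵀ)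
    (QY : Matrix (Fin n) (Fin n) ℝ)
    (hQY : QY = (1 : Matrix (Fin n) (Fin n) ℝ) - Y * (Yᵀ * Y)⁻¹ * Yᵀ) :
    (Yᵀ * QX * Y)⁻¹ =
      (Yᵀ * Y)⁻¹ + (Yᵀ * Y)⁻¹ * Yᵀ * X * (Xᵀ * QY * X)⁻¹ * Xᵀ * Y * (Yᵀ * Y)⁻¹ := by
  have hW : Function.Injective (fromCols X Y).mulVec :=
    mulVec_injective_of_rank_eq_card (by simpa using hrank)
  have hXX := isUnit_transpose_mul_self (mulVec_injective_of_fromCols_left hW)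
  have hYY := isUnit_transpose_mul_self (mulVec_injective_of_fromCols_right hW)
  rw [hQX, hQY, mul_one_sub_mul_mul, mul_one_sub_mul_mul,
    sub_mul_mul_inv_eq_add hYY hXX (isUnit_schur_complement_of_injective_fromCols hW)]
  simp only [Matrix.mul_assoc]

theorem stmt_14 (n p d : ℕ) (hp : 0 < p) (hd : 0 < d) (hn : p + d ≤ n)
    (X : Matrix (Fin n) (Fin p) ℝ) (Y : Matrix (Fin n) (Fin d) ℝ)
    (hrank : (Matrix.fromCols X Y).rank = p + d)
    (QX : Matrix (Fin n) (Fin n) ℝ)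
    (hQX : QX = (1 : Matrix (Fin n) (Fin n) ℝ) - X * (Xᵀ * X)⁻¹ * Xᵀ)
    (QY : Matrix (Fin n) (Fin n) ℝ)
    (hQY : QY = (1 : Matrix (Fin n) (Fin n) ℝ) - Y * (Yᵀ * Y)⁻¹ * Yᵀ) :
    (Yᵀ * QX * Y)⁻¹ =
      (Yᵀ * Y)⁻¹ + (Yᵀ * Y)⁻¹ * Yᵀ * X * (Xᵀ * QY * X)⁻¹ * Xᵀ * Y * (Yᵀ * Y)⁻¹ :=
  stmt_14_general n p d X Y hrank QX hQX QY hQY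
end
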